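/- arXiv:2402.14996 — 11 statements merged into one kernel-verified Lean document; each statement's English description precedes it below -/
import Mathlib

section
/- If a, b, α, β are positive real numbers with max{a,b} ≥ max{α,β} and a² + b² > α² + β², then for all p > 2 it holds that a^p + b^p > α^p + β^p. -/
/-!
Put `x = α²`, `y = β²`, `u = a²`, `v = b²` and `f t = t ^ (p / 2)`, which is convex and strictly
increasing on `[0, ∞)`. Assuming `b ≤ a`, we have `x, y ≤ u` and `x + y < u + v`. If `y ≤ v` the
claim follows termwise from monotonicity. Otherwise, for `x ≥ y`, the points are ordered
`v < y ≤ x < u` and `y - v < u - x`, so comparing secant slopes of `f` over `[v, y]` and `[x, u]`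
gives `f y - f v < f u - f x`.
-/

open Set

variable {𝕜 : Type*} [Field 𝕜] [LinearOrder 𝕜] [IsStrictOrderedRing 𝕜] {s : Set 𝕜} {f : 𝕜 → 𝕜}

theorem ConvexOn.slope_le_slope_of_le (hf : ConvexOn 𝕜 s f) {x y u v : 𝕜} (hx : x ∈ s)
    (hy : y ∈ s) (hu : u ∈ s) (hv : v ∈ s) (hxy : x < y) (hyu : y ≤ u) (huv : u < v) :
    (f y - f x) / (y - x) ≤ (f v - f u) / (v - u) := by
  have hxv : x < v := hxy.trans_le hyu |>.trans huv
  calc (f y - f x) / (y - x)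
      ≤ (f v - f x) / (v - x) :=
        hf.secant_mono hx hy hv hxy.ne' hxv.ne' (hyu.trans huv.le)
    _ = (f x - f v) / (x - v) := by rw [← neg_div_neg_eq, neg_sub, neg_sub]
    _ ≤ (f u - f v) / (u - v) :=
        hf.secant_mono hv hx hu hxv.ne huv.ne (hxy.le.trans hyu)
    _ = (f v - f u) / (v - u) := by rw [← neg_div_neg_eq, neg_sub, neg_sub]

theorem ConvexOn.add_lt_add_of_weak_majorization (hf : ConvexOn 𝕜 s f) (hmono : StrictMonoOn f s)
    {x y u v : 𝕜} (hx : x ∈ s) (hy : y ∈ s) (hu : u ∈ s) (hv : v ∈ s) (hxu : x ≤ u) (hyu : y ≤ u)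
    (hsum : x + y < u + v) : f x + f y < f u + f v := by
  wlog hyx : y ≤ x generalizing x y
  · rw [add_comm (f x)]
    exact this hy hx hyu hxu (by rwa [add_comm y]) (le_of_not_ge hyx)
  rcases le_or_gt y v with hyv | hvy
  · rcases lt_or_eq_of_le hxu with hxu | rfl
    · exact add_lt_add_of_lt_of_le (hmono hx hu hxu) (hmono.monotoneOn hy hv hyv)
    · linarith [hmono hy hv (by linarith)]
  · have hxu : x < u := by linarith
    have hslope := hf.slope_le_slope_of_le hv hy hx hu hvy hyx hxu
    rw [div_le_div_iff₀ (sub_pos.2 hvy) (sub_pos.2 hxu)] at hslope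
    have hfxu : 0 < f u - f x := sub_pos.2 (hmono hx hu hxu)
    nlinarith [mul_lt_mul_of_pos_left (show y - v < u - x by linarith) hfxu]

theorem stmt_0 (a b α β p : ℝ) (ha : 0 < a) (hb : 0 < b) (hα : 0 < α) (hβ : 0 < β)
    (hmax : max α β ≤ max a b) (hsq : α ^ (2:ℝ) + β ^ (2:ℝ) < a ^ (2:ℝ) + b ^ (2:ℝ))
    (hp : 2 < p) :
    α ^ p + β ^ p < a ^ p + b ^ p := by
  wlog hba : b ≤ a generalizing a b
  · have := this b a hb ha (by rwa [max_comm b a]) (by linarith) (le_of_not_ge hba)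
    linarith
  rw [max_eq_left hba, max_le_iff] at hmax
  have hsq_mem : ∀ {t : ℝ}, 0 < t → t ^ (2:ℝ) ∈ Ici 0 := fun ht => (Real.rpow_pos_of_pos ht 2).le
  have hsq_le : ∀ {t : ℝ}, 0 < t → t ≤ a → t ^ (2:ℝ) ≤ a ^ (2:ℝ) :=
    fun ht hta => Real.rpow_le_rpow ht.le hta (by norm_num)
  have key := (convexOn_rpow (p := p / 2) (by linarith)).add_lt_add_of_weak_majorization
    (Real.strictMonoOn_rpow_Ici_of_exponent_pos (by linarith)) (hsq_mem hα) (hsq_mem hβ)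
    (hsq_mem ha) (hsq_mem hb) (hsq_le hα hmax.1) (hsq_le hβ hmax.2) hsq
  have hpow : ∀ {t : ℝ}, 0 < t → (t ^ (2:ℝ)) ^ (p / 2) = t ^ p := fun ht => by
    rw [← Real.rpow_mul ht.le]; ring_nf
  simpa only [hpow ha, hpow hb, hpow hα, hpow hβ] using key
end

section
/- For real numbers u, v ≥ 1, the function f(p) = (u^p + v^p - 1)^(1/p) is non-increasing on [2, ∞). -/
open Set Real

/-- The points `a` and `b` are mirror-image convex combinations of `x` and `a + b - x`;
adding the two convexity inequalities gives the claim. -/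
theorem ConvexOn.add_le_add_sub {s : Set ℝ} {f : ℝ → ℝ} (hf : ConvexOn ℝ s f) {x a b : ℝ}
    (hx : x ∈ s) (hy : a + b - x ∈ s) (hxa : x ≤ a) (hxb : x ≤ b) :
    f a + f b ≤ f x + f (a + b - x) := by
  rcases hxa.eq_or_lt with rfl | hxa'
  · simp
  have hd : 0 < a + b - x - x := by linarith
  have hwa : 0 ≤ (a - x) / (a + b - x - x) := div_nonneg (by linarith) hd.le
  have hwb : 0 ≤ (b - x) / (a + b - x - x) := div_nonneg (by linarith) hd.le
  have hsum : (b - x) / (a + b - x - x) + (a - x) / (a + b - x - x) = 1 := by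
    rw [← add_div, div_eq_one_iff_eq hd.ne']; ring
  have ha := hf.2 hx hy hwb hwa hsum
  have hb := hf.2 hx hy hwa hwb ((add_comm _ _).trans hsum)
  have ea : (b - x) / (a + b - x - x) * x + (a - x) / (a + b - x - x) * (a + b - x) = a := by
    field_simp; ring
  have eb : (a - x) / (a + b - x - x) * x + (b - x) / (a + b - x - x) * (a + b - x) = b := by
    field_simp; ring
  simp only [smul_eq_mul, ea, eb] at ha hb
  linear_combination ha + hb + (f x + f (a + b - x)) * hsum

theorem rpow_add_rpow_le_one_add_rpow {a b s : ℝ} (ha : 1 ≤ a) (hb : 1 ≤ b) (hs : 1 ≤ s) :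
    a ^ s + b ^ s ≤ 1 + (a + b - 1) ^ s := by
  simpa only [one_rpow] using (convexOn_rpow hs).add_le_add_sub (x := 1) (mem_Ici.2 zero_le_one)
    (mem_Ici.2 (by linarith)) ha hb

/-- Raising to the power `q / p ≥ 1` turns the claim into `rpow_add_rpow_le_one_add_rpow`
for `u ^ p` and `v ^ p`. -/
theorem antitoneOn_rpow_add_rpow_sub_one_rpow_inv {u v : ℝ} (hu : 1 ≤ u) (hv : 1 ≤ v) :
    AntitoneOn (fun p : ℝ => (u ^ p + v ^ p - 1) ^ (1 / p)) (Ioi 0) := by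
  intro p (hp : 0 < p) q (hq : 0 < q) hpq
  have hu_pow {r : ℝ} (hr : 0 < r) : 1 ≤ u ^ r := one_le_rpow hu hr.le
  have hv_pow {r : ℝ} (hr : 0 < r) : 1 ≤ v ^ r := one_le_rpow hv hr.le
  have hpow_div {w : ℝ} (hw : 0 ≤ w) : (w ^ p) ^ (q / p) = w ^ q := by
    rw [← rpow_mul hw, mul_div_cancel₀ q hp.ne']
  have hkey : u ^ q + v ^ q - 1 ≤ (u ^ p + v ^ p - 1) ^ (q / p) := by
    have := rpow_add_rpow_le_one_add_rpow (hu_pow hp) (hv_pow hp) ((one_le_div hp).2 hpq)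
    rw [hpow_div (by linarith), hpow_div (by linarith)] at this
    linarith
  calc (u ^ q + v ^ q - 1) ^ (1 / q)
      ≤ ((u ^ p + v ^ p - 1) ^ (q / p)) ^ (1 / q) := by
        gcongr
        linarith [hu_pow hq, hv_pow hq]
    _ = (u ^ p + v ^ p - 1) ^ (1 / p) := by
        rw [← rpow_mul (by linarith [hu_pow hp, hv_pow hp])]
        congr 1
        field_simp

theorem stmt_3 (u v : ℝ) (hu : 1 ≤ u) (hv : 1 ≤ v) :
    AntitoneOn (fun p : ℝ => (u ^ p + v ^ p - 1) ^ (1 / p)) (Set.Ici (2 : ℝ)) :=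
  (antitoneOn_rpow_add_rpow_sub_one_rpow_inv hu hv).mono fun _ hp =>
    mem_Ioi.2 (zero_lt_two.trans_le hp)
end

section
/- For real numbers u, v ≥ 1 and p ≥ 0, it holds that p·(u^p · ln u + v^p · ln v) ≤ (u^p + v^p - 1) · ln(u^p + v^p - 1). -/
/-! Since `x ↦ x log x` is convex and vanishes at `1`, the pair `(1, a + b - 1)` majorizes
`(a, b)`, giving `a log a + b log b ≤ (a + b - 1) log (a + b - 1)` for `a, b ≥ 1`; take
`a = u ^ p`, `b = v ^ p` and `log (u ^ p) = p log u`. -/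

open Set

theorem ConvexOn.add_le_add_of_add_eq {𝕜 β : Type*} [Field 𝕜] [LinearOrder 𝕜]
    [IsStrictOrderedRing 𝕜] [AddCommMonoid β] [PartialOrder β] [IsOrderedAddMonoid β]
    [Module 𝕜 β] {s : Set 𝕜} {f : 𝕜 → β} (hf : ConvexOn 𝕜 s f) {a b c d : 𝕜}
    (hc : c ∈ s) (hd : d ∈ s) (hca : c ≤ a) (had : a ≤ d) (h : a + b = c + d) :
    f a + f b ≤ f c + f d := by
  rcases hca.trans had |>.eq_or_lt with hcd | hcd
  · obtain rfl : a = c := le_antisymm (hcd ▸ had) hca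
    obtain rfl : b = d := by linarith
    exact le_rfl
  obtain rfl : b = c + d - a := by linear_combination h
  have hdc : d - c ≠ 0 := sub_ne_zero.2 hcd.ne'
  set t := (a - c) / (d - c)
  set t' := (d - a) / (d - c)
  have h₀ : 0 ≤ t := div_nonneg (sub_nonneg.2 hca) (sub_nonneg.2 hcd.le)
  have h₁ : 0 ≤ t' := div_nonneg (sub_nonneg.2 had) (sub_nonneg.2 hcd.le)
  have ht : t + t' = 1 := by simp only [t, t']; field_simp; ring
  have hta : t' • c + t • d = a := by simp only [smul_eq_mul, t, t']; field_simp; ring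
  have htb : t • c + t' • d = c + d - a := by simp only [smul_eq_mul, t, t']; field_simp; ring
  calc f a + f (c + d - a)
      ≤ (t' • f c + t • f d) + (t • f c + t' • f d) := by
        gcongr
        · exact hta ▸ hf.2 hc hd h₁ h₀ (by rw [add_comm, ht])
        · exact htb ▸ hf.2 hc hd h₀ h₁ ht
    _ = f c + f d := by
        rw [add_add_add_comm, ← add_smul, ← add_smul, add_comm t', ht, one_smul, one_smul]

theorem mul_log_add_mul_log_le {a b : ℝ} (ha : 1 ≤ a) (hb : 1 ≤ b) :
    a * Real.log a + b * Real.log b ≤ (a + b - 1) * Real.log (a + b - 1) := by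
  have := Real.convexOn_mul_log.add_le_add_of_add_eq (b := b) (mem_Ici.2 zero_le_one)
    (mem_Ici.2 (by linarith : (0 : ℝ) ≤ a + b - 1)) ha (by linarith) (by ring)
  simpa using this

theorem stmt_4 (u v p : ℝ) (hu : 1 ≤ u) (hv : 1 ≤ v) (hp : 0 ≤ p) :
    p * (u ^ p * Real.log u + v ^ p * Real.log v) ≤
      (u ^ p + v ^ p - 1) * Real.log (u ^ p + v ^ p - 1) := by
  have key := mul_log_add_mul_log_le (Real.one_le_rpow hu hp) (Real.one_le_rpow hv hp)
  rw [Real.log_rpow (by linarith) p, Real.log_rpow (by linarith) p] at key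
  linarith
end

section
/- Fix p ≥ 1 and n ≥ 1. Let c : Fin n → Fin m → ℝ≥0 be additive costs with total cost C_i = Σ_j c i j > 0 for every agent i, and normalized costs c̃_{ij} = c_{ij}/C_i. If a fractional allocation x* : Fin n → Fin m → [0,1] with Σ_i x*_{ij} = 1 for all j minimizes Σ_i (Σ_j x_{ij}·c̃_{ij})^p over all fractional allocations x, then for every agent i, Σ_j x*_{ij}·c_{ij} ≤ n^{1/p} · C_i / n. -/
/-- A fractional allocation of `m` divisible chores among `n` agents. -/
def IsFracAlloc {n m : ℕ} (x : Fin n → Fin m → ℝ) : Prop :=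
  (∀ i j, 0 ≤ x i j ∧ x i j ≤ 1) ∧ ∀ j, ∑ i, x i j = 1

/-! Comparing the optimum with the uniform allocation `y i j = 1 / n`, under which every agent has
normalized cost `1 / n`, gives `∑ i, s i ^ p ≤ n * (1 / n) ^ p` for the normalized costs `s i` of
the optimum; a single term of the sum is then at most `n ^ (1 / p) / n`. -/

theorem isFracAlloc_uniform {n m : ℕ} (hn : 0 < n) :
    IsFracAlloc (fun (_ : Fin n) (_ : Fin m) => (n : ℝ)⁻¹) := by
  have hn' : (0 : ℝ) < n := by exact_mod_cast hn
  refine ⟨fun _ _ => ⟨by positivity, inv_le_one_of_one_le₀ (by exact_mod_cast hn)⟩, fun _ => ?_⟩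
  simp [Finset.sum_const, mul_inv_cancel₀ hn'.ne']

theorem sum_mul_div_sum {ι : Type*} [Fintype ι] (x c : ι → ℝ) :
    ∑ j, x j * (c j / ∑ k, c k) = (∑ j, x j * c j) / ∑ k, c k := by
  simp only [Finset.sum_div, mul_div_assoc]

theorem sum_const_mul_div_sum {ι : Type*} [Fintype ι] (t : ℝ) {c : ι → ℝ} (hc : ∑ k, c k ≠ 0) :
    ∑ j, t * (c j / ∑ k, c k) = t := by
  rw [sum_mul_div_sum, ← Finset.mul_sum, mul_div_cancel_right₀ _ hc]

theorem le_card_rpow_inv_mul_of_sum_rpow_le {ι : Type*} [Fintype ι] {p t : ℝ} {s : ι → ℝ}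
    (hp : 0 < p) (ht : 0 ≤ t) (hs : ∀ a, 0 ≤ s a)
    (h : ∑ a, s a ^ p ≤ Fintype.card ι * t ^ p) (i : ι) :
    s i ≤ (Fintype.card ι : ℝ) ^ p⁻¹ * t := by
  have hsi : s i ^ p ≤ Fintype.card ι * t ^ p :=
    (Finset.single_le_sum (fun a _ => Real.rpow_nonneg (hs a) p) (Finset.mem_univ i)).trans h
  have hbound := (Real.le_rpow_inv_iff_of_pos (hs i) (by positivity) hp).2 hsi
  rwa [Real.mul_rpow (by positivity) (by positivity), Real.rpow_rpow_inv ht hp.ne'] at hbound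

theorem stmt_5_general (p : ℝ) (hp : 1 ≤ p) (n m : ℕ)
    (c : Fin n → Fin m → ℝ) (hc : ∀ i j, 0 ≤ c i j)
    (hC : ∀ i, 0 < ∑ j, c i j)
    (x : Fin n → Fin m → ℝ) (hx : IsFracAlloc x)
    (hmin : ∀ y : Fin n → Fin m → ℝ, IsFracAlloc y →
      ∑ i, (∑ j, x i j * (c i j / ∑ k, c i k)) ^ p ≤
        ∑ i, (∑ j, y i j * (c i j / ∑ k, c i k)) ^ p)
    (i : Fin n) :
    ∑ j, x i j * c i j ≤ (n : ℝ) ^ (1 / p) * (∑ j, c i j) / n := by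
  have hn : 0 < n := i.pos
  have hopt := hmin _ (isFracAlloc_uniform (m := m) hn)
  simp only [sum_const_mul_div_sum _ (hC _).ne', Finset.sum_const, Finset.card_univ,
    Fintype.card_fin, nsmul_eq_mul] at hopt
  have hload := le_card_rpow_inv_mul_of_sum_rpow_le (t := (n : ℝ)⁻¹) (by linarith : 0 < p)
    (by positivity)
    (fun a => Finset.sum_nonneg fun j _ => mul_nonneg (hx.1 a j).1 (div_nonneg (hc a j) (hC a).le))
    (by rwa [Fintype.card_fin]) i
  rw [sum_mul_div_sum, div_le_iff₀ (hC i), Fintype.card_fin] at hload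
  calc ∑ j, x i j * c i j ≤ (n : ℝ) ^ p⁻¹ * (n : ℝ)⁻¹ * ∑ j, c i j := hload
    _ = (n : ℝ) ^ (1 / p) * (∑ j, c i j) / n := by rw [one_div]; ring

theorem stmt_5 (p : ℝ) (hp : 1 ≤ p) (n m : ℕ) (hn : 1 ≤ n)
    (c : Fin n → Fin m → ℝ) (hc : ∀ i j, 0 ≤ c i j)
    (hC : ∀ i, 0 < ∑ j, c i j)
    (x : Fin n → Fin m → ℝ) (hx : IsFracAlloc x)
    (hmin : ∀ y : Fin n → Fin m → ℝ, IsFracAlloc y →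
      ∑ i, (∑ j, x i j * (c i j / ∑ k, c i k)) ^ p ≤
        ∑ i, (∑ j, y i j * (c i j / ∑ k, c i k)) ^ p)
    (i : Fin n) :
    ∑ j, x i j * c i j ≤ (n : ℝ) ^ (1 / p) * (∑ j, c i j) / n :=
  stmt_5_general p hp n m c hc hC x hx hmin i
end

section
/- There is no weakly-increasing function 𝒞 : ℝ² → ℝ (meaning 𝒞(x) > 𝒞(y) whenever x₁ > y₁ and x₂ > y₂) such that for every divisible-chore instance with 2 agents with additive costs, some allocation minimizing 𝒞(c₁(x₁), c₂(x₂)) is β-EF, for any fixed β ≥ 1. -/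
/-!
Take one chore and a large constant `N = β + 2`. In the instance with costs `(N, 1)`, β-envy-freeness
forces agent 0 to take a share `t ≥ 1 / (1 + β)`, so the β-EF minimizer has costs `(t N, 1 - t)`,
strictly above `(1, 0)` in both coordinates; being a minimizer, it costs at most giving the chore
to agent 1, i.e. `𝒞(0, 1)`. The mirrored instance with costs `(1, N)` gives likewise a point
strictly above `(0, 1)` of cost at most `𝒞(1, 0)`. Chaining these four comparisons yields
`𝒞(t N, 1 - t) < 𝒞(t N, 1 - t)`.
-/

def HasEFMinimizer (β : ℝ) (C : ℝ → ℝ → ℝ) : Prop :=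
  ∀ (m : ℕ) (c : Fin 2 → Fin m → ℝ), (∀ i j, 0 ≤ c i j) →
    ∃ x : Fin 2 → Fin m → ℝ,
      (∀ i j, 0 ≤ x i j) ∧ (∀ j, x 0 j + x 1 j = 1) ∧
      (∀ y : Fin 2 → Fin m → ℝ, (∀ i j, 0 ≤ y i j) → (∀ j, y 0 j + y 1 j = 1) →
        C (∑ j, x 0 j * c 0 j) (∑ j, x 1 j * c 1 j) ≤
          C (∑ j, y 0 j * c 0 j) (∑ j, y 1 j * c 1 j)) ∧
      (∑ j, x 0 j * c 0 j ≤ β * ∑ j, x 1 j * c 0 j) ∧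
      (∑ j, x 1 j * c 1 j ≤ β * ∑ j, x 0 j * c 1 j)

theorem HasEFMinimizer.exists_share_of_single_chore {β : ℝ} {C : ℝ → ℝ → ℝ}
    (h : HasEFMinimizer β C) {a b : ℝ} (ha : 0 ≤ a) (hb : 0 ≤ b) :
    ∃ t u : ℝ, t + u = 1 ∧ C (t * a) (u * b) ≤ C 0 b ∧ C (t * a) (u * b) ≤ C a 0 ∧
      t * a ≤ β * (u * a) ∧ u * b ≤ β * (t * b) := by
  obtain ⟨x, -, hsum, hmin, hef₀, hef₁⟩ := h 1 ![![a], ![b]] (by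
    intro i j; fin_cases i <;> fin_cases j <;> assumption)
  have hcorner : ∀ p q : ℝ, 0 ≤ p → 0 ≤ q → p + q = 1 →
      C (x 0 0 * a) (x 1 0 * b) ≤ C (p * a) (q * b) := by
    intro p q hp hq hpq
    simpa using hmin ![![p], ![q]]
      (by intro i j; fin_cases i <;> fin_cases j <;> assumption) (fun _ ↦ by simpa using hpq)
  refine ⟨x 0 0, x 1 0, hsum 0, ?_, ?_, by simpa using hef₀, by simpa using hef₁⟩
  · simpa using hcorner 0 1 le_rfl zero_le_one (zero_add 1)
  · simpa using hcorner 1 0 zero_le_one le_rfl (add_zero 1)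

/-- Adding the two β-EF constraints gives `β ≥ 1`, and the cheap agent's one gives `t (1 + β) ≥ 1`. -/
theorem one_lt_mul_of_envyFree {β N t u : ℝ} (hN : 0 < N) (hβN : β + 1 < N) (hsum : t + u = 1)
    (hcheap : u ≤ β * t) (hdear : t * N ≤ β * (u * N)) :
    1 < t * N ∧ 0 < u := by
  have ht : t ≤ β * u := le_of_mul_le_mul_right (by linarith) hN
  have hβ : 1 ≤ β := by nlinarith
  have ht_lower : 1 ≤ t * (1 + β) := by nlinarith
  have htpos : 0 < t := by nlinarith
  constructor <;> nlinarith

theorem stmt_7 (β : ℝ) (hβ : 1 ≤ β) :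
    ¬ ∃ C : ℝ → ℝ → ℝ,
      (∀ x1 x2 y1 y2 : ℝ, y1 < x1 → y2 < x2 → C y1 y2 < C x1 x2) ∧
      (∀ (m : ℕ) (c : Fin 2 → Fin m → ℝ), (∀ i j, 0 ≤ c i j) →
        ∃ x : Fin 2 → Fin m → ℝ,
          (∀ i j, 0 ≤ x i j) ∧ (∀ j, x 0 j + x 1 j = 1) ∧
          (∀ y : Fin 2 → Fin m → ℝ, (∀ i j, 0 ≤ y i j) → (∀ j, y 0 j + y 1 j = 1) →
            C (∑ j, x 0 j * c 0 j) (∑ j, x 1 j * c 1 j) ≤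
              C (∑ j, y 0 j * c 0 j) (∑ j, y 1 j * c 1 j)) ∧
          (∑ j, x 0 j * c 0 j ≤ β * ∑ j, x 1 j * c 0 j) ∧
          (∑ j, x 1 j * c 1 j ≤ β * ∑ j, x 0 j * c 1 j)) := by
  rintro ⟨C, hmono, hrule⟩
  have hN : 0 < β + 2 := by linarith
  have hβN : β + 1 < β + 2 := by linarith
  obtain ⟨t, u, htu, hI, -, hI₀, hI₁⟩ :=
    HasEFMinimizer.exists_share_of_single_chore hrule hN.le zero_le_one
  obtain ⟨s, v, hsv, -, hII, hII₀, hII₁⟩ :=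
    HasEFMinimizer.exists_share_of_single_chore hrule zero_le_one hN.le
  obtain ⟨ht, hu⟩ := one_lt_mul_of_envyFree hN hβN htu (by simpa using hI₁) hI₀
  obtain ⟨hv, hs⟩ :=
    one_lt_mul_of_envyFree hN hβN ((add_comm v s).trans hsv) (by simpa using hII₀) hII₁
  rw [mul_one] at hI hII
  exact lt_irrefl _ <| calc
    C (t * (β + 2)) u ≤ C 0 1 := hI
    _ < C s (v * (β + 2)) := hmono _ _ _ _ hs hv
    _ ≤ C 1 0 := hII
    _ < C (t * (β + 2)) u := hmono _ _ _ _ ht hu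
end

section
/- In the 2-agent instance with m = 2β+2 divisible chores (β ≥ 1 an integer), where agent 1 has cost 1 for every chore and agent 2 has cost 1 for chore 1 and cost m for every other chore, every β-EF allocation (x₁, x₂) satisfies c₁(x₁) ≥ 1.5 and c₂(x₂) ≥ m + 1. -/
/-!
Write `S` and `T` for the total shares of agents 1 and 2, so `S + T = m`, and `a` for agent 2's
share of chore 1. Agent 1's β-EF condition `S ≤ β T` forces `T ≥ m / (β + 1) = 2`, hence
`c₂(x₂) = m T - (m - 1) a ≥ 2m - (m - 1) = m + 1`. Agent 2's β-EF condition, after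
eliminating `T = m - S` and bounding `a ≤ 1`, gives `(β + 1) m S ≥ m² - m + 1`; with
`(β + 1) m = m² / 2` this is `S ≥ 2 - 2 (m - 1) / m² ≥ 3 / 2`, the last step being `(m - 2)² ≥ 0`.
-/

open Finset

theorem sum_mul_ite_val_eq_zero {n : ℕ} (y : Fin (n + 1) → ℝ) (c : ℝ) :
    ∑ j, y j * (if (j : ℕ) = 0 then 1 else c) = c * ∑ j, y j - (c - 1) * y 0 := by
  simp only [Fin.sum_univ_succ, Fin.val_zero, Fin.val_succ, Nat.succ_ne_zero, if_true,
    if_false, mul_add, mul_sum]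
  simp only [mul_comm c]
  ring

theorem two_le_of_add_eq_of_le_mul {b S T : ℝ} (hb : 0 ≤ b) (hST : S + T = 2 * b + 2)
    (hS : S ≤ b * T) : 2 ≤ T := by
  nlinarith

theorem add_one_le_mul_sub_mul {M T a : ℝ} (hM : 1 ≤ M) (hT : 2 ≤ T) (ha : a ≤ 1) :
    M + 1 ≤ M * T - (M - 1) * a := by
  nlinarith

theorem three_halves_le {b S T a : ℝ} (hb : 0 ≤ b) (hST : S + T = 2 * b + 2) (ha : a ≤ 1)
    (hEF : (2 * b + 2) * T - (2 * b + 1) * a ≤ b * ((2 * b + 2) * S - (2 * b + 1) * (1 - a))) :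
    3 / 2 ≤ S := by
  have hshare : 4 * (b + 1) ^ 2 - 2 * (b + 1) + 1 ≤ 2 * (b + 1) ^ 2 * S := by
    have : 0 ≤ (b + 1) * (2 * b + 1) * (1 - a) := by
      have := sub_nonneg.2 ha
      positivity
    nlinarith
  have hpos : 0 < (b + 1) ^ 2 := by positivity
  nlinarith [sq_nonneg b]

theorem stmt_8_general (β : ℕ) (m : ℕ) (hm : m = 2 * β + 2)
    (x : Fin 2 → Fin m → ℝ) (hxnn : ∀ i j, 0 ≤ x i j) (hxsum : ∀ j, x 0 j + x 1 j = 1)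
    (hEF1 : ∑ j, x 0 j * (1 : ℝ) ≤
      (β : ℝ) * ∑ j, x 1 j * (1 : ℝ))
    (hEF2 : ∑ j, x 1 j * (if (j : ℕ) = 0 then (1 : ℝ) else (m : ℝ)) ≤
      (β : ℝ) * ∑ j, x 0 j * (if (j : ℕ) = 0 then (1 : ℝ) else (m : ℝ))) :
    (3 / 2 : ℝ) ≤ ∑ j, x 0 j * (1 : ℝ) ∧
      (m : ℝ) + 1 ≤ ∑ j, x 1 j * (if (j : ℕ) = 0 then (1 : ℝ) else (m : ℝ)) := by
  subst hm
  have hb : (0 : ℝ) ≤ β := β.cast_nonneg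
  have htotal : ∑ j, x 0 j + ∑ j, x 1 j = 2 * (β : ℝ) + 2 := by
    rw [← sum_add_distrib]
    simp [hxsum]
  have ha : x 1 0 ≤ 1 := by linarith [hxsum 0, hxnn 0 0]
  have hx00 : x 0 0 = 1 - x 1 0 := by linarith [hxsum 0]
  simp only [mul_one, sum_mul_ite_val_eq_zero, hx00] at hEF1 hEF2 ⊢
  push_cast at hEF2 ⊢
  have hT := two_le_of_add_eq_of_le_mul hb htotal hEF1
  refine ⟨three_halves_le hb htotal ha (by linarith), ?_⟩
  exact add_one_le_mul_sub_mul (by linarith) hT ha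

theorem stmt_8 (β : ℕ) (hβ : 1 ≤ β) (m : ℕ) (hm : m = 2 * β + 2)
    (x : Fin 2 → Fin m → ℝ) (hxnn : ∀ i j, 0 ≤ x i j) (hxsum : ∀ j, x 0 j + x 1 j = 1)
    (hEF1 : ∑ j, x 0 j * (1 : ℝ) ≤
      (β : ℝ) * ∑ j, x 1 j * (1 : ℝ))
    (hEF2 : ∑ j, x 1 j * (if (j : ℕ) = 0 then (1 : ℝ) else (m : ℝ)) ≤
      (β : ℝ) * ∑ j, x 0 j * (if (j : ℕ) = 0 then (1 : ℝ) else (m : ℝ))) :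
    (3 / 2 : ℝ) ≤ ∑ j, x 0 j * (1 : ℝ) ∧
      (m : ℝ) + 1 ≤ ∑ j, x 1 j * (if (j : ℕ) = 0 then (1 : ℝ) else (m : ℝ)) :=
  stmt_8_general β m hm x hxnn hxsum hEF1 hEF2
end

section
/- Fix p > 1 and an integer n > p. In the divisible-chore instance with n agents and 2 chores where agent 1 has normalized costs c̃₁₁ = 1 - ((p-1)/(n-1))^((p-1)/p) and c̃₁₂ = ((p-1)/(n-1))^((p-1)/p), and each other agent j has c̃_{j1} = 0, c̃_{j2} = 1: in any allocation minimizing Σ_i c̃_i(x_i)^p, agent 1 receives exactly a 1/p fraction of chore 2, and agent 1's normalized cost equals (1/p)·((p-1)/(n-1))^((p-1)/p). -/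
open Real Finset

lemma StrictConvexOn.add_deriv_mul_sub_lt {S : Set ℝ} {f : ℝ → ℝ} {x y f' : ℝ}
    (hf : StrictConvexOn ℝ S f) (hx : x ∈ S) (hy : y ∈ S) (hxy : x ≠ y)
    (hf' : HasDerivAt f f' x) : f x + f' * (y - x) < f y := by
  rcases hxy.lt_or_gt with h | h
  · have := hf.lt_slope_of_hasDerivAt hx hy h hf'
    rw [slope_def_field, lt_div_iff₀ (sub_pos.2 h)] at this
    linarith
  · have := hf.slope_lt_of_hasDerivAt hy hx h hf'
    rw [slope_def_field, div_lt_iff₀ (sub_pos.2 h)] at this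
    linarith

namespace Real

lemma rpow_add_mul_rpow_sub_one_mul_sub_lt {p s t : ℝ} (hp : 1 < p) (hs : 0 ≤ s) (ht : 0 ≤ t)
    (hst : s ≠ t) : s ^ p + p * s ^ (p - 1) * (t - s) < t ^ p :=
  (strictConvexOn_rpow hp).add_deriv_mul_sub_lt hs ht hst
    (hasDerivAt_rpow_const (Or.inr hp.le))

lemma rpow_add_mul_rpow_sub_one_mul_sub_le {p s t : ℝ} (hp : 1 < p) (hs : 0 ≤ s)
    (ht : 0 ≤ t) : s ^ p + p * s ^ (p - 1) * (t - s) ≤ t ^ p := by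
  rcases eq_or_ne s t with rfl | hst
  · simp
  · exact (rpow_add_mul_rpow_sub_one_mul_sub_lt hp hs ht hst).le

lemma card_mul_rpow_sum_div_card_le_sum_rpow {ι : Type*} (s : Finset ι) {y : ι → ℝ}
    (hy : ∀ i ∈ s, 0 ≤ y i) {p : ℝ} (hp : 1 ≤ p) :
    #s * ((∑ i ∈ s, y i) / #s) ^ p ≤ ∑ i ∈ s, y i ^ p := by
  rcases s.eq_empty_or_nonempty with rfl | hne
  · simp
  have hk : (0 : ℝ) < #s := by exact_mod_cast hne.card_pos
  have := rpow_arith_mean_le_arith_mean_rpow s (fun _ ↦ (#s : ℝ)⁻¹) y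
    (fun _ _ ↦ by positivity) (by simp [hk.ne']) hy hp
  rw [← mul_sum, ← mul_sum, ← div_eq_inv_mul, ← div_eq_inv_mul] at this
  rwa [← le_div_iff₀' hk]

end Real

/-- `φ(u)` of the header, with `m` agents sharing `1 - u` evenly. -/
noncomputable def reducedCost (p m a u : ℝ) : ℝ := (a * u) ^ p + m * ((1 - u) / m) ^ p

lemma reducedCost_one_div_lt {p m u : ℝ} (hp : 1 < p) (hm : 0 < m) (hu0 : 0 ≤ u) (hu1 : u ≤ 1)
    (hu : u ≠ 1 / p) :
    reducedCost p m (((p - 1) / m) ^ ((p - 1) / p)) (1 / p) <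
      reducedCost p m (((p - 1) / m) ^ ((p - 1) / p)) u := by
  have hp0 : 0 < p := by linarith
  set r := (p - 1) / m
  have hr : 0 < r := div_pos (by linarith) hm
  set a := r ^ ((p - 1) / p)
  have ha : 0 < a := rpow_pos_of_pos hr _
  set s := (1 - 1 / p) / m
  have hs : 0 ≤ s := div_nonneg (by rw [sub_nonneg, div_le_one hp0]; linarith) hm.le
  have hslope : a * (a / p) ^ (p - 1) = s ^ (p - 1) := by
    have hsr : s = r / p := by simp only [s, r]; field_simp
    rw [hsr, div_rpow ha.le hp0.le, div_rpow hr.le hp0.le, rpow_sub_one ha.ne', mul_div_assoc',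
      mul_div_cancel₀ _ ha.ne', ← rpow_mul hr.le, div_mul_cancel₀ _ hp0.ne']
  have h₁ := rpow_add_mul_rpow_sub_one_mul_sub_lt hp (div_pos ha hp0).le (mul_nonneg ha.le hu0)
    fun h ↦ hu (mul_left_cancel₀ ha.ne' (by rw [← h, mul_one_div]))
  have h₂ := rpow_add_mul_rpow_sub_one_mul_sub_le hp hs (div_nonneg (sub_nonneg.2 hu1) hm.le)
  have hm_share : m * ((1 - u) / m - s) = 1 / p - u := by simp only [s]; field_simp; ring
  have hlin : p * (a / p) ^ (p - 1) * (a * u - a / p) + m * (p * s ^ (p - 1) * ((1 - u) / m - s))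
      = 0 := by
    rw [show m * (p * s ^ (p - 1) * ((1 - u) / m - s)) = p * s ^ (p - 1) * (m * ((1 - u) / m - s))
      by ring, hm_share, ← hslope]
    field_simp
    ring
  unfold reducedCost
  rw [mul_one_div]
  linarith [mul_le_mul_of_nonneg_left h₂ hm.le]

section ChoreInstance

variable {n : ℕ} {c : Fin n → Fin 2 → ℝ} {i₀ : Fin n}

variable (i₀) in
lemma card_erase_univ_eq : (#(univ.erase i₀) : ℝ) = n - 1 := by
  rw [card_erase_of_mem (mem_univ _), card_univ, Fintype.card_fin, Nat.cast_sub i₀.pos,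
    Nat.cast_one]

lemma sum_cost_rpow_eq (p : ℝ) (hc : ∀ i, i ≠ i₀ → c i 0 = 0 ∧ c i 1 = 1)
    (y : Fin n → Fin 2 → ℝ) :
    ∑ i, (∑ j, y i j * c i j) ^ p =
      (∑ j, y i₀ j * c i₀ j) ^ p + ∑ i ∈ univ.erase i₀, y i 1 ^ p := by
  rw [← add_sum_erase _ _ (mem_univ i₀)]
  congr 1
  refine sum_congr rfl fun i hi ↦ ?_
  obtain ⟨hc0, hc1⟩ := hc i (ne_of_mem_erase hi)
  simp [Fin.sum_univ_two, hc0, hc1]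

lemma reduced_le_sum_cost_rpow {p : ℝ} (hp : 1 ≤ p)
    (hc : ∀ i, i ≠ i₀ → c i 0 = 0 ∧ c i 1 = 1) {y : Fin n → Fin 2 → ℝ}
    (hy : IsFracAlloc y) :
    (∑ j, y i₀ j * c i₀ j) ^ p + (n - 1) * ((1 - y i₀ 1) / (n - 1)) ^ p ≤
      ∑ i, (∑ j, y i j * c i j) ^ p := by
  have hrest : ∑ i ∈ univ.erase i₀, y i 1 = 1 - y i₀ 1 := by
    rw [← hy.2 1, ← add_sum_erase _ _ (mem_univ i₀), add_sub_cancel_left]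
  have := card_mul_rpow_sum_div_card_le_sum_rpow (univ.erase i₀) (fun i _ ↦ (hy.1 i 1).1) hp
  rw [hrest, card_erase_univ_eq] at this
  rw [sum_cost_rpow_eq p hc]
  gcongr

variable (i₀) in
noncomputable def evenSplitAlloc (u : ℝ) : Fin n → Fin 2 → ℝ :=
  fun i ↦ if i = i₀ then ![0, u] else ![1 / (n - 1), (1 - u) / (n - 1)]

lemma sum_erase_evenSplitAlloc (u : ℝ) (f : (Fin 2 → ℝ) → ℝ) :
    ∑ i ∈ univ.erase i₀, f (evenSplitAlloc i₀ u i) =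
      (n - 1) * f ![1 / (n - 1), (1 - u) / (n - 1)] := by
  rw [sum_congr rfl fun i hi ↦ by rw [evenSplitAlloc, if_neg (ne_of_mem_erase hi)], sum_const,
    nsmul_eq_mul, card_erase_univ_eq]

lemma isFracAlloc_evenSplitAlloc (hn : 2 ≤ n) {u : ℝ} (hu0 : 0 ≤ u) (hu1 : u ≤ 1) :
    IsFracAlloc (evenSplitAlloc i₀ u) := by
  have hm : (1 : ℝ) ≤ n - 1 := by
    have : (2 : ℝ) ≤ n := by exact_mod_cast hn
    linarith
  refine ⟨fun i j ↦ ?_, fun j ↦ ?_⟩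
  · by_cases hi : i = i₀ <;> fin_cases j <;> simp only [evenSplitAlloc, hi, ↓reduceIte,
      Fin.zero_eta, Fin.mk_one, Matrix.cons_val_zero, Matrix.cons_val_one, Matrix.cons_val_fin_one]
    · exact ⟨le_rfl, zero_le_one⟩
    · exact ⟨hu0, hu1⟩
    · exact ⟨by positivity, div_le_one_of_le₀ hm (by linarith)⟩
    · exact ⟨div_nonneg (by linarith) (by linarith),
        div_le_one_of_le₀ (by linarith) (by linarith)⟩
  · rw [← add_sum_erase _ _ (mem_univ i₀), sum_erase_evenSplitAlloc u (· j)]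
    fin_cases j <;> simp only [evenSplitAlloc, ↓reduceIte, Fin.zero_eta, Fin.mk_one,
      Matrix.cons_val_zero, Matrix.cons_val_one, Matrix.cons_val_fin_one, zero_add]
    · field_simp
    · field_simp; ring

lemma sum_cost_rpow_evenSplitAlloc (p : ℝ) (hc : ∀ i, i ≠ i₀ → c i 0 = 0 ∧ c i 1 = 1)
    (u : ℝ) :
    ∑ i, (∑ j, evenSplitAlloc i₀ u i j * c i j) ^ p = reducedCost p (n - 1) (c i₀ 1) u := by
  rw [sum_cost_rpow_eq p hc, sum_erase_evenSplitAlloc u (· 1 ^ p)]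
  simp [evenSplitAlloc, reducedCost, Fin.sum_univ_two, mul_comm]

end ChoreInstance

theorem stmt_10 (p : ℝ) (hp : 1 < p) (n : ℕ) (hn : 0 < n) (hnp : p < n)
    (c : Fin n → Fin 2 → ℝ)
    (hc00 : c ⟨0, hn⟩ 0 = 1 - ((p - 1) / ((n : ℝ) - 1)) ^ ((p - 1) / p))
    (hc01 : c ⟨0, hn⟩ 1 = ((p - 1) / ((n : ℝ) - 1)) ^ ((p - 1) / p))
    (hcj : ∀ i : Fin n, i ≠ ⟨0, hn⟩ → c i 0 = 0 ∧ c i 1 = 1)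
    (x : Fin n → Fin 2 → ℝ) (hx : IsFracAlloc x)
    (hmin : ∀ y : Fin n → Fin 2 → ℝ, IsFracAlloc y →
      ∑ i, (∑ j, x i j * c i j) ^ p ≤ ∑ i, (∑ j, y i j * c i j) ^ p) :
    x ⟨0, hn⟩ 1 = 1 / p ∧
      ∑ j, x ⟨0, hn⟩ j * c ⟨0, hn⟩ j =
        (1 / p) * ((p - 1) / ((n : ℝ) - 1)) ^ ((p - 1) / p) := by
  set i₀ : Fin n := ⟨0, hn⟩
  set a := ((p - 1) / ((n : ℝ) - 1)) ^ ((p - 1) / p)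
  have hn2 : 2 ≤ n := by exact_mod_cast (by linarith : (1 : ℝ) < n)
  have hm : (0 : ℝ) < n - 1 := by linarith
  have hr : 0 < (p - 1) / ((n : ℝ) - 1) := div_pos (by linarith) hm
  have ha1 : a < 1 := rpow_lt_one hr.le ((div_lt_one hm).2 (by linarith)) (by positivity)
  obtain ⟨hx0, -⟩ := hx.1 i₀ 0
  obtain ⟨hu0, hu1⟩ := hx.1 i₀ 1
  set u := x i₀ 1
  have hopt : ∑ i, (∑ j, x i j * c i j) ^ p ≤ reducedCost p (n - 1) a (1 / p) := by
    have := hmin _ (isFracAlloc_evenSplitAlloc (i₀ := i₀) hn2 (by positivity)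
      (div_le_one_of_le₀ hp.le (by positivity)))
    rwa [sum_cost_rpow_evenSplitAlloc p hcj, hc01] at this
  have hlow := reduced_le_sum_cost_rpow hp.le hcj hx
  have hagent : ∑ j, x i₀ j * c i₀ j = x i₀ 0 * (1 - a) + a * u := by
    rw [Fin.sum_univ_two, hc00, hc01]; ring
  have hau : a * u ≤ ∑ j, x i₀ j * c i₀ j := by
    rw [hagent]; linarith [mul_nonneg hx0 (sub_nonneg.2 ha1.le)]
  have hu : u = 1 / p := by
    by_contra h
    have := reducedCost_one_div_lt hp hm hu0 hu1 h
    have := rpow_le_rpow (by positivity) hau (by linarith : 0 ≤ p)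
    unfold reducedCost at *
    linarith
  have hG : ∑ j, x i₀ j * c i₀ j ≤ a * u := by
    rw [← rpow_le_rpow_iff ((by positivity : 0 ≤ a * u).trans hau) (by positivity)
      (by linarith : 0 < p)]
    have := hlow.trans hopt
    rw [← hu] at this
    unfold reducedCost at this
    linarith
  have hx00 : x i₀ 0 = 0 := by
    have : x i₀ 0 * (1 - a) ≤ 0 := by linarith
    exact le_antisymm (nonpos_of_mul_nonpos_left this (sub_pos.2 ha1)) hx0
  exact ⟨hu, by rw [hagent, hx00, hu]; ring⟩
end

section
/- Let n = 2 agents have normalized additive costs c̃₁, c̃₂ over a finite set M of indivisible chores, with c̃_i(M) = 1 for each i. Suppose an integral allocation (A₁, A₂) satisfies c̃₁(A₁) < c̃₂(A₁) < 1, and there is a chore t* ∈ A₂ with c̃₂(t*) > 0 such that c̃₂(A₂ \ {t*}) > c̃₂(A₁) (agent 2 envies agent 1 even after removing t*), and c̃₁(t*)/c̃₂(t*) ≤ c̃₁(A₂)/c̃₂(A₂). Then c̃₁(A₁ ∪ {t*})² + c̃₂(A₂ \ {t*})² < c̃₁(A₁)² + c̃₂(A₂)² and max{c̃₁(A₁ ∪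 {t*}), c̃₂(A₂ \ {t*})} < max{c̃₁(A₁), c̃₂(A₂)}. -/
/-!
Write `a = c̃₁(A₁)`, `b = c̃₂(A₁)`, `u = c̃₁(t*)`, `v = c̃₂(t*)`, so that the bundle costs
`c̃₁(A₂) = 1 - a` and `c̃₂(A₂) = 1 - b` come from the normalization, and the ratio condition reads
`u (1 - b) ≤ (1 - a) v`. Agent 2's cost of his own bundle exceeds `1/2`, so it is the maximum, and
moving `t*` to agent 1 lowers both costs below it. For the sum of squares, the gain
`(a + u)² - a²` is increasing in `u`, so it suffices to take `u = v (1 - a) / (1 - b)`; the claim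
then follows from the envy bound `v < 1 - 2b`, up to the square `(b - a)²`.
-/

namespace ChoreTransfer

variable {a b u v : ℝ}

lemma add_lt_one_sub (ha : 0 ≤ a) (hab : a < b) (hv : 0 < v) (henvy : b < 1 - b - v)
    (hratio : u * (1 - b) ≤ (1 - a) * v) : a + u < 1 - b := by
  have hb : 0 < 1 - b := by linarith
  refine lt_of_mul_lt_mul_right ?_ hb.le
  calc (a + u) * (1 - b) ≤ a * (1 - b) + (1 - a) * v := by linarith
    _ < a * (1 - b) + (1 - a) * (1 - 2 * b) := by gcongr <;> linarith
    _ ≤ (1 - b) * (1 - b) := by nlinarith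

lemma max_add_sub_lt_max (ha : 0 ≤ a) (hab : a < b) (hv : 0 < v) (henvy : b < 1 - b - v)
    (hratio : u * (1 - b) ≤ (1 - a) * v) : max (a + u) (1 - b - v) < max a (1 - b) := by
  rw [max_lt_iff, max_eq_right (show a ≤ 1 - b by linarith)]
  exact ⟨add_lt_one_sub ha hab hv henvy hratio, by linarith⟩

/-- The transfer of `t*` at the extreme ratio `u = v (1 - a) / (1 - b)`, cleared of denominators. -/
lemma extreme_gain_lt (hv : 0 < v) (henvy : b < 1 - b - v) :
    (1 - a) * v * (2 * a * (1 - b) + (1 - a) * v) < (1 - b) ^ 2 * (v * (2 * (1 - b) - v)) := by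
  have hsq : 0 < (1 - a) ^ 2 + (1 - b) ^ 2 := by nlinarith
  have hv' : v * ((1 - a) ^ 2 + (1 - b) ^ 2) < (1 - 2 * b) * ((1 - a) ^ 2 + (1 - b) ^ 2) :=
    mul_lt_mul_of_pos_right (by linarith) hsq
  linear_combination mul_lt_mul_of_pos_left hv' hv + v * sq_nonneg (b - a)

lemma add_sq_add_sub_sq_lt (ha : 0 ≤ a) (hu : 0 ≤ u) (hv : 0 < v) (henvy : b < 1 - b - v)
    (hratio : u * (1 - b) ≤ (1 - a) * v) :
    (a + u) ^ 2 + (1 - b - v) ^ 2 < a ^ 2 + (1 - b) ^ 2 := by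
  have hb : 0 < 1 - b := by linarith
  have hgain : (1 - b) ^ 2 * (u * (2 * a + u)) ≤
      (1 - a) * v * (2 * a * (1 - b) + (1 - a) * v) := by
    calc (1 - b) ^ 2 * (u * (2 * a + u))
        = u * (1 - b) * (2 * a * (1 - b) + u * (1 - b)) := by ring
      _ ≤ (1 - a) * v * (2 * a * (1 - b) + (1 - a) * v) := by
          gcongr
          linarith [mul_nonneg hu hb.le]
  have hgain_lt : u * (2 * a + u) < v * (2 * (1 - b) - v) :=
    lt_of_mul_lt_mul_left (hgain.trans_lt (extreme_gain_lt hv henvy)) (sq_nonneg (1 - b))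
  linear_combination hgain_lt

end ChoreTransfer

lemma Finset.sum_compl_eq_one_sub {ι : Type*} [Fintype ι] [DecidableEq ι] {c : ι → ℝ}
    (hc : ∑ j, c j = 1) (s : Finset ι) : ∑ j ∈ sᶜ, c j = 1 - ∑ j ∈ s, c j := by
  rw [← hc, ← Finset.sum_add_sum_compl s]
  ring

open ChoreTransfer in
theorem stmt_15_general {χ : Type*} [Fintype χ] [DecidableEq χ]
    (c1 c2 : χ → ℝ) (h1 : ∀ j, 0 ≤ c1 j)
    (hs1 : ∑ j, c1 j = 1) (hs2 : ∑ j, c2 j = 1)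
    (A1 A2 : Finset χ) (hpart : A2 = A1ᶜ)
    (hlt : ∑ j ∈ A1, c1 j < ∑ j ∈ A1, c2 j)
    (t : χ) (ht : t ∈ A2) (htpos : 0 < c2 t)
    (henvy : ∑ j ∈ A1, c2 j < ∑ j ∈ A2.erase t, c2 j)
    (hratio : c1 t / c2 t ≤ (∑ j ∈ A2, c1 j) / (∑ j ∈ A2, c2 j)) :
    (∑ j ∈ insert t A1, c1 j) ^ 2 + (∑ j ∈ A2.erase t, c2 j) ^ 2 <
      (∑ j ∈ A1, c1 j) ^ 2 + (∑ j ∈ A2, c2 j) ^ 2 ∧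
    max (∑ j ∈ insert t A1, c1 j) (∑ j ∈ A2.erase t, c2 j) <
      max (∑ j ∈ A1, c1 j) (∑ j ∈ A2, c2 j) := by
  subst hpart
  have htA1 : t ∉ A1 := Finset.mem_compl.1 ht
  rw [Finset.sum_erase_eq_sub ht, Finset.sum_compl_eq_one_sub hs2] at henvy ⊢
  rw [Finset.sum_compl_eq_one_sub hs1, Finset.sum_compl_eq_one_sub hs2,
    div_le_div_iff₀ htpos (by linarith)] at hratio
  rw [Finset.sum_insert htA1, add_comm (c1 t)]
  have ha : 0 ≤ ∑ j ∈ A1, c1 j := Finset.sum_nonneg fun j _ => h1 j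
  exact ⟨add_sq_add_sub_sq_lt ha (h1 t) htpos henvy hratio,
    max_add_sub_lt_max ha hlt htpos henvy hratio⟩

theorem stmt_15 {χ : Type*} [Fintype χ] [DecidableEq χ]
    (c1 c2 : χ → ℝ) (h1 : ∀ j, 0 ≤ c1 j) (h2 : ∀ j, 0 ≤ c2 j)
    (hs1 : ∑ j, c1 j = 1) (hs2 : ∑ j, c2 j = 1)
    (A1 A2 : Finset χ) (hpart : A2 = A1ᶜ)
    (hlt : ∑ j ∈ A1, c1 j < ∑ j ∈ A1, c2 j) (hlt1 : ∑ j ∈ A1, c2 j < 1)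
    (t : χ) (ht : t ∈ A2) (htpos : 0 < c2 t)
    (henvy : ∑ j ∈ A1, c2 j < ∑ j ∈ A2.erase t, c2 j)
    (hratio : c1 t / c2 t ≤ (∑ j ∈ A2, c1 j) / (∑ j ∈ A2, c2 j)) :
    (∑ j ∈ insert t A1, c1 j) ^ 2 + (∑ j ∈ A2.erase t, c2 j) ^ 2 <
      (∑ j ∈ A1, c1 j) ^ 2 + (∑ j ∈ A2, c2 j) ^ 2 ∧
    max (∑ j ∈ insert t A1, c1 j) (∑ j ∈ A2.erase t, c2 j) <
      max (∑ j ∈ A1, c1 j) (∑ j ∈ A2, c2 j) :=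
  stmt_15_general c1 c2 h1 hs1 hs2 A1 A2 hpart hlt t ht htpos henvy hratio
end

section
/- For n = 2 agents with additive normalized costs over indivisible chores (c̃_i(M) = 1 for each agent) and any p ≥ 2, every integral allocation (A₁, A₂) minimizing c̃₁(A₁)^p + c̃₂(A₂)^p over all partitions of M is EF1: for each agent i, either c̃_i(A_i) ≤ c̃_i(A_{-i}), or there exists a chore t ∈ A_i with c̃_i(A_i \ {t}) ≤ c̃_i(A_{-i}). -/
/-!
Suppose agent 1 is not EF1, so `a = c₁(A₁) > 1/2` and every chore of `A₁` has `c₁`-cost below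
`2a - 1`. Comparing with the swapped allocation shows `b = c₂(A₂) ≤ 1 - a`. Averaging the ratios
`c₂(t) / c₁(t)` over `A₁` gives a chore `t` with `a · c₂(t) ≤ (1 - b) · c₁(t)`, and handing `t` to
agent 2 strictly decreases the sum of squares `a² + b²`, with both new costs still at most `a`.
Since `u ↦ u^(p/2)` is convex and increasing, the two-point majorization inequality turns this
into a strict decrease of `a^p + b^p`, contradicting minimality.
-/

open Finset

section Majorization

variable {𝕜 : Type*} [Field 𝕜] [LinearOrder 𝕜] [IsStrictOrderedRing 𝕜] {f : 𝕜 → 𝕜}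

theorem ConvexOn.map_add_map_le {s : Set 𝕜} (hf : ConvexOn 𝕜 s f) {w x z : 𝕜} (hw : w ∈ s)
    (hz : z ∈ s) (hwx : w ≤ x) (hxz : x ≤ z) : f x + f (z + w - x) ≤ f z + f w := by
  rcases hwx.eq_or_lt with rfl | hwx
  · rw [add_sub_cancel_right, add_comm]
  have hwz : 0 < z - w := by linarith
  have ha : 0 ≤ (x - w) / (z - w) := div_nonneg (by linarith) hwz.le
  have hb : 0 ≤ (z - x) / (z - w) := div_nonneg (by linarith) hwz.le
  have hsum : (x - w) / (z - w) + (z - x) / (z - w) = 1 := by field_simp; ring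
  have hx := hf.2 hz hw ha hb hsum
  have hy := hf.2 hz hw hb ha (by rw [add_comm, hsum])
  simp only [smul_eq_mul] at hx hy
  have ex : (x - w) / (z - w) * z + (z - x) / (z - w) * w = x := by field_simp; ring
  have ey : (z - x) / (z - w) * z + (x - w) / (z - w) * w = z + w - x := by field_simp; ring
  rw [ex] at hx
  rw [ey] at hy
  linear_combination hx + hy + (f z + f w) * hsum

theorem ConvexOn.map_add_map_lt_of_strictMonoOn (hf : ConvexOn 𝕜 (Set.Ici 0) f)
    (hmono : StrictMonoOn f (Set.Ici 0)) {x y z w : 𝕜} (hx : 0 ≤ x) (hy : 0 ≤ y) (hw : 0 ≤ w)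
    (hxz : x ≤ z) (hyz : y ≤ z) (h : x + y < z + w) : f x + f y < f z + f w := by
  rcases le_or_gt (x + y) z with hxyz | hzxy
  · have hsup := hf.map_add_map_le (w := 0) (x := x) (z := x + y) Set.self_mem_Ici
      (add_nonneg hx hy) hx (le_add_of_nonneg_right hy)
    rw [add_zero, add_sub_cancel_left] at hsup
    rcases hxyz.lt_or_eq with hlt | rfl
    · linarith [hmono (add_nonneg hx hy) (hx.trans hxz) hlt,
        hmono.monotoneOn Set.self_mem_Ici hw hw]
    · linarith [hmono Set.self_mem_Ici hw (by linarith : (0 : 𝕜) < w)]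
  · have hexcess := hf.map_add_map_le (w := x + y - z) (x := x) (z := z)
      (by simp only [Set.mem_Ici]; linarith) (hx.trans hxz) (by linarith) hxz
    rw [add_sub_cancel, add_sub_cancel_left] at hexcess
    linarith [hmono (by simp only [Set.mem_Ici]; linarith : x + y - z ∈ Set.Ici 0) hw (by linarith)]

end Majorization

theorem Real.rpow_add_rpow_lt_of_sq_add_sq_lt {p x y z w : ℝ} (hp : 2 ≤ p) (hx : 0 ≤ x)
    (hy : 0 ≤ y) (hw : 0 ≤ w) (hxz : x ≤ z) (hyz : y ≤ z) (h : x ^ 2 + y ^ 2 < z ^ 2 + w ^ 2) :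
    x ^ p + y ^ p < z ^ p + w ^ p := by
  have hsq : ∀ u : ℝ, 0 ≤ u → (u ^ 2) ^ (p / 2) = u ^ p := fun u hu => by
    rw [← Real.rpow_natCast, ← Real.rpow_mul hu]
    congr 1
    push_cast
    ring
  have key := (convexOn_rpow (p := p / 2) (by linarith)).map_add_map_lt_of_strictMonoOn
    (Real.strictMonoOn_rpow_Ici_of_exponent_pos (by linarith)) (sq_nonneg x) (sq_nonneg y)
    (sq_nonneg w) (pow_le_pow_left₀ hx hxz 2) (pow_le_pow_left₀ hy hyz 2) h
  rwa [hsq x hx, hsq y hy, hsq z (hx.trans hxz), hsq w hw] at key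

theorem Finset.exists_pos_mul_le_mul_of_sum_pos {ι R : Type*} [CommRing R] [LinearOrder R]
    [IsStrictOrderedRing R] {s : Finset ι} {f g : ι → R} (hf : ∀ i ∈ s, 0 ≤ f i)
    (hg : ∀ i ∈ s, 0 ≤ g i) (hpos : 0 < ∑ i ∈ s, f i) :
    ∃ i ∈ s, 0 < f i ∧ (∑ j ∈ s, f j) * g i ≤ (∑ j ∈ s, g j) * f i := by
  classical
  set s' := s.filter (0 < f ·)
  have hfs' : ∑ i ∈ s', f i = ∑ i ∈ s, f i :=
    sum_filter_of_ne fun i hi hne => (hf i hi).lt_of_ne' hne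
  have hgs' : ∑ i ∈ s', g i ≤ ∑ i ∈ s, g i :=
    sum_le_sum_of_subset_of_nonneg (filter_subset _ _) fun i hi _ => hg i hi
  have hne : s'.Nonempty := by
    rw [nonempty_iff_ne_empty]
    rintro hempty
    rw [hempty, sum_empty] at hfs'
    exact hpos.ne hfs'
  have hle : ∑ i ∈ s', (∑ j ∈ s, f j) * g i ≤ ∑ i ∈ s', (∑ j ∈ s, g j) * f i := by
    rw [← mul_sum, ← mul_sum, hfs', mul_comm]
    exact mul_le_mul_of_nonneg_right hgs' hpos.le
  obtain ⟨i, hi, hile⟩ := exists_le_of_sum_le hne hle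
  obtain ⟨his, hfi⟩ := mem_filter.1 hi
  exact ⟨i, his, hfi, hile⟩

theorem sub_sq_add_add_sq_lt {a b x y : ℝ} (hb : 0 ≤ b) (hab : b ≤ 1 - a) (hx : 0 < x)
    (hxa : x < 2 * a - 1) (hy : 0 ≤ y) (hxy : a * y ≤ (1 - b) * x) :
    (a - x) ^ 2 + (b + y) ^ 2 < a ^ 2 + b ^ 2 := by
  have ha : 0 < a := by linarith
  -- times `a²`, and with `a * y ≤ (1 - b) * x`, the claim reduces to `hx'`; `hkey` is its value at
  -- the endpoint `x = 2a - 1`, where `a + b ≤ 1` is used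
  have hkey : (2 * a - 1) * ((1 - b) ^ 2 + a ^ 2) ≤ 2 * a ^ 3 - 2 * a * b * (1 - b) := by
    nlinarith [sq_nonneg (a - (1 - b))]
  have hx' : x * ((1 - b) ^ 2 + a ^ 2) < 2 * a ^ 3 - 2 * a * b * (1 - b) :=
    lt_of_lt_of_le (mul_lt_mul_of_pos_right hxa (by positivity)) hkey
  have hsq : (a * y) ^ 2 ≤ ((1 - b) * x) ^ 2 := pow_le_pow_left₀ (by positivity) hxy 2
  have hlin : a * b * (a * y) ≤ a * b * ((1 - b) * x) :=
    mul_le_mul_of_nonneg_left hxy (by positivity)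
  have : a ^ 2 * ((a - x) ^ 2 + (b + y) ^ 2) < a ^ 2 * (a ^ 2 + b ^ 2) := by
    nlinarith [mul_lt_mul_of_pos_left hx' hx]
  exact lt_of_mul_lt_mul_left this (sq_nonneg a)

theorem sub_rpow_add_add_rpow_lt {p a b x y : ℝ} (hp : 2 ≤ p) (hb : 0 ≤ b) (hab : b ≤ 1 - a)
    (hx : 0 < x) (hxa : x < 2 * a - 1) (hy : 0 ≤ y) (hxy : a * y ≤ (1 - b) * x) :
    (a - x) ^ p + (b + y) ^ p < a ^ p + b ^ p := by
  have hya : b + y ≤ a := by nlinarith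
  exact Real.rpow_add_rpow_lt_of_sq_add_sq_lt hp (by linarith) (by linarith) hb (by linarith) hya
    (sub_sq_add_add_sq_lt hb hab hx hxa hy hxy)

def EnvyFreeUpToOne {χ : Type*} [DecidableEq χ] (c : χ → ℝ) (A B : Finset χ) : Prop :=
  ∑ j ∈ A, c j ≤ ∑ j ∈ B, c j ∨ ∃ t ∈ A, ∑ j ∈ A.erase t, c j ≤ ∑ j ∈ B, c j

theorem envyFreeUpToOne_of_forall_rpow_add_rpow_le {χ : Type*} [Fintype χ] [DecidableEq χ]
    {c₁ c₂ : χ → ℝ} (h₁ : ∀ j, 0 ≤ c₁ j) (h₂ : ∀ j, 0 ≤ c₂ j) (hs₁ : ∑ j, c₁ j = 1)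
    (hs₂ : ∑ j, c₂ j = 1) {p : ℝ} (hp : 2 ≤ p) {A : Finset χ}
    (hmin : ∀ B : Finset χ, (∑ j ∈ A, c₁ j) ^ p + (∑ j ∈ Aᶜ, c₂ j) ^ p ≤
      (∑ j ∈ B, c₁ j) ^ p + (∑ j ∈ Bᶜ, c₂ j) ^ p) :
    EnvyFreeUpToOne c₁ A Aᶜ := by
  set a := ∑ j ∈ A, c₁ j
  set b := ∑ j ∈ Aᶜ, c₂ j
  have hac₁ : ∑ j ∈ Aᶜ, c₁ j = 1 - a := by rw [← hs₁, ← sum_add_sum_compl A c₁]; ring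
  have hac₂ : ∑ j ∈ A, c₂ j = 1 - b := by rw [← hs₂, ← sum_add_sum_compl A c₂]; ring
  have hb₀ : 0 ≤ b := sum_nonneg fun j _ => h₂ j
  have ha₁ : 0 ≤ 1 - a := hac₁ ▸ sum_nonneg fun j _ => h₁ j
  have hb₁ : 0 ≤ 1 - b := hac₂ ▸ sum_nonneg fun j _ => h₂ j
  rw [EnvyFreeUpToOne, hac₁]
  by_contra! ⟨hgt, herase⟩
  have hab : b ≤ 1 - a := by
    by_contra! hba
    have hswap := hmin Aᶜ
    rw [compl_compl, hac₁, hac₂] at hswap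
    have hlt₁ := Real.rpow_lt_rpow ha₁ hba (by linarith : 0 < p)
    have hlt₂ := Real.rpow_lt_rpow hb₁ (by linarith : 1 - b < a) (by linarith : 0 < p)
    linarith
  obtain ⟨t, htA, hxt, hyt⟩ :=
    exists_pos_mul_le_mul_of_sum_pos (fun j _ => h₁ j) (fun j _ => h₂ j) (by linarith : 0 < a)
  rw [hac₂] at hyt
  have hA₁ : ∑ j ∈ A.erase t, c₁ j = a - c₁ t := eq_sub_of_add_eq (sum_erase_add A c₁ htA)
  have hA₂ : ∑ j ∈ (A.erase t)ᶜ, c₂ j = b + c₂ t := by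
    rw [compl_erase, sum_insert (notMem_compl.2 htA), add_comm]
  have hmove := hmin (A.erase t)
  rw [hA₁, hA₂] at hmove
  have hxa : c₁ t < 2 * a - 1 := by linarith [herase t htA]
  exact hmove.not_gt (sub_rpow_add_add_rpow_lt hp hb₀ hab hxt hxa (h₂ t) hyt)

theorem stmt_16 {χ : Type*} [Fintype χ] [DecidableEq χ]
    (c1 c2 : χ → ℝ) (h1 : ∀ j, 0 ≤ c1 j) (h2 : ∀ j, 0 ≤ c2 j)
    (hs1 : ∑ j, c1 j = 1) (hs2 : ∑ j, c2 j = 1)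
    (p : ℝ) (hp : 2 ≤ p)
    (A : Finset χ)
    (hmin : ∀ B : Finset χ,
      (∑ j ∈ A, c1 j) ^ p + (∑ j ∈ Aᶜ, c2 j) ^ p ≤
        (∑ j ∈ B, c1 j) ^ p + (∑ j ∈ Bᶜ, c2 j) ^ p) :
    ((∑ j ∈ A, c1 j ≤ ∑ j ∈ Aᶜ, c1 j) ∨
      ∃ t ∈ A, ∑ j ∈ A.erase t, c1 j ≤ ∑ j ∈ Aᶜ, c1 j) ∧
    ((∑ j ∈ Aᶜ, c2 j ≤ ∑ j ∈ A, c2 j) ∨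
      ∃ t ∈ Aᶜ, ∑ j ∈ Aᶜ.erase t, c2 j ≤ ∑ j ∈ A, c2 j) := by
  have hmin' : ∀ B : Finset χ, (∑ j ∈ Aᶜ, c2 j) ^ p + (∑ j ∈ Aᶜᶜ, c1 j) ^ p ≤
      (∑ j ∈ B, c2 j) ^ p + (∑ j ∈ Bᶜ, c1 j) ^ p := fun B => by
    simpa only [compl_compl, add_comm] using hmin Bᶜ
  have hef₂ := envyFreeUpToOne_of_forall_rpow_add_rpow_le h2 h1 hs2 hs1 hp hmin'
  rw [compl_compl] at hef₂
  exact ⟨envyFreeUpToOne_of_forall_rpow_add_rpow_le h1 h2 hs1 hs2 hp hmin, hef₂⟩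
end

section
/- Let 0 < ε < δ and 1 < p < 2 with δ < ε + (2ε+1)(1 - p/2), and set α = 1/(p-1), Δ = (δ-ε)/(1/2+ε). Then ((1/2+ε)^(p/(p-1)) - (1/2-δ)(1/2+δ)^(1/(p-1))) / ((1/2+δ)^(p/(p-1)) + (1/2+ε)^(p/(p-1))) < ε/(1/2+ε). -/
/-!
Write `a = 1/2 + ε`, `b = 1/2 + δ` and `α = 1/(p-1)`, so that `p/(p-1) = 1 + α`. Clearing
denominators, the inequality is equivalent to `a ^ (1 + α) < (2a - b) b ^ α`. With `b = a (1 + Δ)`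
this reads `1 < (1 - Δ) (1 + Δ) ^ α`, which follows from Bernoulli's inequality
`(1 + Δ) ^ α ≥ 1 + αΔ` because `(1 - Δ) (1 + αΔ) = 1 + Δ (α - 1 - αΔ)` and `αΔ < α - 1`
is exactly the hypothesis on `δ`.
-/

open Real

lemma one_lt_one_sub_mul_one_add_rpow {Δ α : ℝ} (hΔ : 0 < Δ) (hα : 1 ≤ α)
    (hΔα : α * Δ < α - 1) : 1 < (1 - Δ) * (1 + Δ) ^ α := by
  have hΔ1 : Δ < 1 := by nlinarith
  have bernoulli : 1 + α * Δ ≤ (1 + Δ) ^ α :=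
    one_add_mul_self_le_rpow_one_add (by linarith) hα
  calc 1 < (1 - Δ) * (1 + α * Δ) := by nlinarith [mul_pos hΔ (sub_pos.2 hΔα)]
    _ ≤ (1 - Δ) * (1 + Δ) ^ α := mul_le_mul_of_nonneg_left bernoulli (by linarith)

lemma mul_rpow_lt_two_mul_sub_mul_rpow {a b α : ℝ} (ha : 0 < a) (hab : a < b) (hα : 1 ≤ α)
    (hbα : α * (b - a) < (α - 1) * a) : a * a ^ α < (2 * a - b) * b ^ α := by
  obtain ⟨Δ, rfl⟩ : ∃ Δ, b = a * (1 + Δ) := ⟨(b - a) / a, by field_simp; ring⟩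
  have hΔ : 0 < Δ := by nlinarith
  have hΔα : α * Δ < α - 1 := by nlinarith
  have key := one_lt_one_sub_mul_one_add_rpow hΔ hα hΔα
  have hΔ1 : 0 ≤ 1 + Δ := by linarith
  calc a * a ^ α = a * a ^ α * 1 := (mul_one _).symm
    _ < a * a ^ α * ((1 - Δ) * (1 + Δ) ^ α) := by gcongr
    _ = (2 * a - a * (1 + Δ)) * (a * (1 + Δ)) ^ α := by
      rw [mul_rpow ha.le hΔ1]; ring

lemma div_lt_sub_half_div_of_mul_lt {a b A B : ℝ} (ha : 0 < a) (hb : 0 < b) (hA : 0 < A)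
    (hB : 0 < B) (h : a * A < (2 * a - b) * B) :
    (a * A - (1 - b) * B) / (b * B + a * A) < (a - 1 / 2) / a := by
  rw [div_lt_div_iff₀ (by positivity) ha]
  linear_combination (1 / 2 : ℝ) * h

theorem stmt_17 (ε δ p : ℝ) (hε : 0 < ε) (hεδ : ε < δ) (hp1 : 1 < p) (hp2 : p < 2)
    (hδ : δ < ε + (2 * ε + 1) * (1 - p / 2)) :
    ((1 / 2 + ε) ^ (p / (p - 1)) - (1 / 2 - δ) * (1 / 2 + δ) ^ (1 / (p - 1))) /
        ((1 / 2 + δ) ^ (p / (p - 1)) + (1 / 2 + ε) ^ (p / (p - 1))) <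
      ε / (1 / 2 + ε) := by
  have ha : 0 < 1 / 2 + ε := by linarith
  have hb : 0 < 1 / 2 + δ := by linarith
  have hp : 0 < p - 1 := by linarith
  have hpα : p / (p - 1) = 1 + 1 / (p - 1) := by field_simp; ring
  have hα1 : 1 / (p - 1) - 1 = 1 / (p - 1) * (2 - p) := by field_simp; ring
  set α := 1 / (p - 1)
  have hα : 1 ≤ α := by rw [le_div_iff₀ hp]; linarith
  have hbα : α * ((1 / 2 + δ) - (1 / 2 + ε)) < (α - 1) * (1 / 2 + ε) := by
    rw [hα1, mul_assoc]
    exact mul_lt_mul_of_pos_left (by linarith) (by positivity)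
  have key := div_lt_sub_half_div_of_mul_lt ha hb (rpow_pos_of_pos ha α) (rpow_pos_of_pos hb α)
    (mul_rpow_lt_two_mul_sub_mul_rpow ha (by linarith) hα hbα)
  rw [hpα, rpow_add ha, rpow_add hb, rpow_one, rpow_one]
  convert key using 3 <;> ring
end

section
/- Let c̃₁, c̃₂ be normalized additive costs of two agents over a partition (A₁, A₂) of chores M with c̃_i(M) = 1, and suppose c̃₁(A₁) = c̃₂(A₁). Let t* ∈ A₂ with c̃₂(t*) > 0, c̃₁(t*) ≤ c̃₂(t*), and c̃₂(A₂ \ {t*}) > c̃₂(A₁). Then c̃₁(A₁ ∪ {t*})² + c̃₂(A₂ \ {t*})² < c̃₁(A₁)² + c̃₂(A₂)² and c̃₁(A₁ ∪ {t*}) < c̃₂(A₂). -/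
/-! Moving `t*` from agent 2 to agent 1 raises agent 1's cost by `c̃₁(t*) ≤ c̃₂(t*) = u` and
lowers agent 2's by `u`. With `x = c̃₁(A₁) = c̃₂(A₁)` and `y = c̃₂(A₂)`, the sum of squares
changes by at most `(x + u)² + (y - u)² - x² - y² = 2u(x + u - y)`, which is negative because
agent 2 still envies `A₁` after losing `t*`. -/

open Finset

theorem Finset.sum_insert_le_add {ι M : Type*} [DecidableEq ι] [AddCommMonoid M] [PartialOrder M]
    [IsOrderedAddMonoid M] {f : ι → M} {a : ι} (s : Finset ι) (ha : 0 ≤ f a) :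
    ∑ j ∈ insert a s, f j ≤ f a + ∑ j ∈ s, f j := by
  by_cases has : a ∈ s
  · rw [insert_eq_of_mem has]
    exact le_add_of_nonneg_left ha
  · rw [sum_insert has]

theorem sq_add_sub_sq_lt_sq_add_sq {a x u y : ℝ} (ha : 0 ≤ a) (hax : a ≤ x + u) (hu : 0 < u)
    (hxy : x + u < y) : a ^ 2 + (y - u) ^ 2 < x ^ 2 + y ^ 2 := by
  have hsq : a ^ 2 ≤ (x + u) ^ 2 := pow_le_pow_left₀ ha hax 2
  nlinarith

theorem stmt_19_general {χ : Type*} [DecidableEq χ]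
    (c1 c2 : χ → ℝ) (h1 : ∀ j, 0 ≤ c1 j)
    (A1 A2 : Finset χ)
    (heq : ∑ j ∈ A1, c1 j = ∑ j ∈ A1, c2 j)
    (t : χ) (ht : t ∈ A2) (htpos : 0 < c2 t) (htle : c1 t ≤ c2 t)
    (henvy : ∑ j ∈ A1, c2 j < ∑ j ∈ A2.erase t, c2 j) :
    (∑ j ∈ insert t A1, c1 j) ^ 2 + (∑ j ∈ A2.erase t, c2 j) ^ 2 <
      (∑ j ∈ A1, c1 j) ^ 2 + (∑ j ∈ A2, c2 j) ^ 2 ∧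
    ∑ j ∈ insert t A1, c1 j < ∑ j ∈ A2, c2 j := by
  have hins : ∑ j ∈ insert t A1, c1 j ≤ ∑ j ∈ A1, c1 j + c2 t := by
    linarith [A1.sum_insert_le_add (h1 t)]
  have hnonneg : 0 ≤ ∑ j ∈ insert t A1, c1 j := sum_nonneg fun j _ => h1 j
  rw [sum_erase_eq_sub ht] at henvy ⊢
  exact ⟨sq_add_sub_sq_lt_sq_add_sq hnonneg hins htpos (by linarith), by linarith⟩

theorem stmt_19 {χ : Type*} [Fintype χ] [DecidableEq χ]
    (c1 c2 : χ → ℝ) (h1 : ∀ j, 0 ≤ c1 j) (h2 : ∀ j, 0 ≤ c2 j)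
    (hs1 : ∑ j, c1 j = 1) (hs2 : ∑ j, c2 j = 1)
    (A1 A2 : Finset χ) (hpart : A2 = A1ᶜ)
    (heq : ∑ j ∈ A1, c1 j = ∑ j ∈ A1, c2 j)
    (t : χ) (ht : t ∈ A2) (htpos : 0 < c2 t) (htle : c1 t ≤ c2 t)
    (henvy : ∑ j ∈ A1, c2 j < ∑ j ∈ A2.erase t, c2 j) :
    (∑ j ∈ insert t A1, c1 j) ^ 2 + (∑ j ∈ A2.erase t, c2 j) ^ 2 <
      (∑ j ∈ A1, c1 j) ^ 2 + (∑ j ∈ A2, c2 j) ^ 2 ∧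
    ∑ j ∈ insert t A1, c1 j < ∑ j ∈ A2, c2 j :=
  stmt_19_general c1 c2 h1 A1 A2 heq t ht htpos htle henvy
end
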